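/- For every real number t with |t| ≤ 1 and every real α with 0 < α ≤ 0.76, one has α·t·(1 + t/2) ≥ e^{αt} − 1. -/

import Mathlib

lemma key_exp (x : ℝ) (hx : |x| ≤ 0.76) : Real.exp x ≤ 1 + x + x^2 / 1.52 := by
  rw [show (1.52:ℝ) = 38/25 by norm_num]
  rw [show (0.76:ℝ) = 19/25 by norm_num] at hx
  have h1 : |x| ≤ 1 := hx.trans (by norm_num)
  rcases le_or_gt x 0 with hneg | hpos
  · have hb := Real.exp_bound h1 (n := 4) (by norm_num)
    have hsum : (∑ m ∈ Finset.range 4, x ^ m / m.factorial)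
        = 1 + x + x^2/2 + x^3/6 := by
      simp [Finset.sum_range_succ, Nat.factorial]
    rw [hsum] at hb
    have habs : |x| = -x := abs_of_nonpos hneg
    rw [habs] at hb hx
    norm_num [Nat.factorial] at hb
    have hb' := (abs_sub_le_iff.1 hb).1
    have c1 : 0 ≤ (-x)^3 := pow_nonneg (neg_nonneg.2 hneg) 3
    have c2 : 0 ≤ (-x)^3 * (19/25 - -x) := mul_nonneg c1 (by linarith)
    nlinarith [sq_nonneg x, c1, c2]
  · have hx' : x ≤ 19/25 := (le_abs_self x).trans hx
    have hb := Real.exp_bound' hpos.le (by linarith) (n := 5) (by norm_num)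
    have hsum : (∑ m ∈ Finset.range 5, x ^ m / m.factorial)
        = 1 + x + x^2/2 + x^3/6 + x^4/24 := by
      simp [Finset.sum_range_succ, Nat.factorial]
    rw [hsum] at hb
    norm_num [Nat.factorial] at hb
    have hq : x/6 + x^2/24 + x^3/100 ≤ 3/19 := by
      have e2 : x^2 ≤ (19/25)^2 := by nlinarith
      have e3 : x^3 ≤ (19/25)^3 := by nlinarith
      nlinarith
    have hq2 : x^2 * (x/6 + x^2/24 + x^3/100) ≤ x^2 * (3/19) :=
      mul_le_mul_of_nonneg_left hq (sq_nonneg x)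
    nlinarith [hq2]

theorem exp_upper_bound_alpha_le (t α : ℝ) (ht : |t| ≤ 1) (hα0 : 0 < α) (hα : α ≤ 0.76) :
    Real.exp (α * t) - 1 ≤ α * t * (1 + t / 2) := by
  have hα' : α ≤ 19/25 := by rw [show (0.76:ℝ) = 19/25 by norm_num] at hα; exact hα
  have hx : |α * t| ≤ 0.76 := by
    rw [show (0.76:ℝ) = 19/25 by norm_num, abs_mul, abs_of_pos hα0]
    calc α * |t| ≤ α * 1 := by nlinarith [abs_nonneg t]
    _ ≤ 19/25 := by linarith
  have hkey := key_exp (α * t) hx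
  rw [show (1.52:ℝ) = 38/25 by norm_num] at hkey
  have h2 : (α*t)^2 / (38/25) ≤ α * t^2 / 2 := by
    rw [div_le_div_iff₀ (by norm_num) (by norm_num)]
    nlinarith [mul_nonneg (mul_nonneg hα0.le (sq_nonneg t)) (sub_nonneg.2 hα')]
  nlinarith
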